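/- arXiv:0711.0149 — 3 statements merged into one kernel-verified Lean document; each statement's English description precedes it below -/
import Mathlib

section
/- For every integer l > 0, the Bernoulli numbers satisfy sum_{s=1}^{l} (B_{2s}/(2s)!)·(B_{2l-2s}/(2l-2s)!) = -B_{2l}/(2l-1)! + (1/4)·δ_{l,1}, where δ_{l,1} is 1 if l = 1 and 0 otherwise. -/
open scoped BigOperators

open PowerSeries

local notation "B" => bernoulliPowerSeries ℚ
local notation "E" => PowerSeries.exp ℚ

lemma deriv_exp_q : d⁄dX ℚ (PowerSeries.exp ℚ) = PowerSeries.exp ℚ := by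
  ext n
  rw [PowerSeries.coeff_derivative, PowerSeries.coeff_exp, PowerSeries.coeff_exp]
  simp only [Algebra.algebraMap_self_apply]
  rw [Nat.factorial_succ]
  push_cast
  have h1 : ((n:ℚ)+1) ≠ 0 := by positivity
  have h2 : ((n.factorial :ℚ)) ≠ 0 := by exact_mod_cast n.factorial_ne_zero
  field_simp

lemma exp_sub_one_ne_zero : (PowerSeries.exp ℚ - 1) ≠ 0 := by
  intro h
  have := congrArg (PowerSeries.coeff (R := ℚ) 1) h
  simp [PowerSeries.coeff_exp] at this

lemma key_ps : B * B = B - X * (d⁄dX ℚ B) - X * B := by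
  have hB : B * (E - 1) = X := bernoulliPowerSeries_mul_exp_sub_one ℚ
  have hd : B * (d⁄dX ℚ (E - 1)) + (E - 1) * (d⁄dX ℚ B) = 1 := by
    have := congrArg (d⁄dX ℚ) hB
    rwa [Derivation.leibniz, derivative_X, smul_eq_mul, smul_eq_mul] at this
  have hdB : (d⁄dX ℚ B) * (E - 1) = 1 - B * E := by
    have h1 : d⁄dX ℚ (E - 1) = E := by
      rw [map_sub, deriv_exp_q, Derivation.map_one_eq_zero, sub_zero]
    rw [h1] at hd
    linear_combination hd
  have hc : (B * B) * ((E-1) * (E-1)) = (B - X * (d⁄dX ℚ B) - X * B) * ((E-1)*(E-1)) := by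
    linear_combination (X + B*(E-1) - (E-1) - X*E + X*(E-1)) * hB + X*(E-1) * hdB
  exact mul_right_cancel₀ (mul_ne_zero exp_sub_one_ne_zero exp_sub_one_ne_zero) hc

lemma coeff_B (n : ℕ) : PowerSeries.coeff (R := ℚ) n B = bernoulli n / n.factorial := by
  simp [bernoulliPowerSeries]

lemma conv (m : ℕ) :
    ∑ k ∈ Finset.range (m+2),
      bernoulli k / (k.factorial : ℚ) * (bernoulli (m+1-k) / ((m+1-k).factorial : ℚ))
    = bernoulli (m+1) / ((m+1).factorial : ℚ)
      - (m+1) * (bernoulli (m+1) / ((m+1).factorial : ℚ))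
      - bernoulli m / (m.factorial : ℚ) := by
  have h := congrArg (PowerSeries.coeff (R := ℚ) (m+1)) key_ps
  rw [PowerSeries.coeff_mul, map_sub, map_sub, PowerSeries.coeff_succ_X_mul,
    PowerSeries.coeff_succ_X_mul, PowerSeries.coeff_derivative,
    Finset.Nat.sum_antidiagonal_eq_sum_range_succ_mk] at h
  simp only [coeff_B] at h
  linear_combination h

lemma conv' (n : ℕ) (hn : 1 ≤ n) :
    ∑ k ∈ Finset.range (n+1),
      bernoulli k / (k.factorial : ℚ) * (bernoulli (n-k) / ((n-k).factorial : ℚ))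
    = bernoulli n / (n.factorial : ℚ) - n * (bernoulli n / (n.factorial : ℚ))
      - bernoulli (n-1) / ((n-1).factorial : ℚ) := by
  obtain ⟨m, rfl⟩ : ∃ m, n = m + 1 := ⟨n - 1, by omega⟩
  simpa using conv m

lemma bernoulli_odd {k : ℕ} (h1 : Odd k) (h2 : 1 < k) : bernoulli k = 0 := by
  simp [bernoulli, bernoulli'_eq_zero_of_odd h1 h2]

lemma range_split (f : ℕ → ℚ) (n : ℕ) :
    ∑ k ∈ Finset.range (2*n+1), f k
      = ∑ s ∈ Finset.range (n+1), f (2*s) + ∑ s ∈ Finset.range n, f (2*s+1) := by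
  induction n with
  | zero => simp
  | succ n ih =>
      have h1 : 2*(n+1)+1 = (2*n+1) + 1 + 1 := by ring
      rw [h1, Finset.sum_range_succ, Finset.sum_range_succ, ih,
          Finset.sum_range_succ (fun s => f (2*s)) (n+1),
          Finset.sum_range_succ (fun s => f (2*s+1)) n]
      have h2 : 2*n+1+1 = 2*(n+1) := by ring
      rw [h2]
      ring

lemma sum_range_succ_eq (g : ℕ → ℚ) (l : ℕ) :
    ∑ s ∈ Finset.range (l+1), g s = g 0 + ∑ s ∈ Finset.Icc 1 l, g s := by
  have h : Finset.range (l+1) = insert 0 (Finset.Icc 1 l) := by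
    ext x; simp [Nat.lt_succ_iff]; omega
  rw [h, Finset.sum_insert (by simp)]

lemma bernoulli_two_mul_sub_one (l : ℕ) (hl : 0 < l) :
    bernoulli (2*l - 1) = if l = 1 then (-1/2 : ℚ) else 0 := by
  rcases eq_or_ne l 1 with rfl | h
  · norm_num
  · have h1 : Odd (2*l-1) := ⟨l-1, by omega⟩
    have h2 : 1 < 2*l - 1 := by omega
    simp [h, bernoulli_odd h1 h2]


/-- For every `l > 0`,
`∑_{s=1}^{l} (B_{2s}/(2s)!)·(B_{2l-2s}/(2l-2s)!) = -B_{2l}/(2l-1)! + (1/4)·δ_{l,1}`,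
where `B_n` are the Bernoulli numbers (with `B₁ = -1/2`). -/
theorem bernoulli_convolution_identity (l : ℕ) (hl : 0 < l) :
    ∑ s ∈ Finset.Icc 1 l,
      (bernoulli (2 * s) / (Nat.factorial (2 * s) : ℚ)) *
        (bernoulli (2 * l - 2 * s) / (Nat.factorial (2 * l - 2 * s) : ℚ))
    = -bernoulli (2 * l) / (Nat.factorial (2 * l - 1) : ℚ)
      + (if l = 1 then (1 : ℚ) / 4 else 0) := by
  have h1 := conv' (2*l) (by omega)
  rw [range_split (fun k => bernoulli k / (k.factorial : ℚ)
      * (bernoulli (2*l-k) / ((2*l-k).factorial : ℚ))) l] at h1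
  rw [sum_range_succ_eq] at h1

  have hodd : ∑ s ∈ Finset.range l,
      bernoulli (2*s+1) / (((2*s+1).factorial : ℕ) : ℚ)
        * (bernoulli (2*l-(2*s+1)) / (((2*l-(2*s+1)).factorial : ℕ) : ℚ))
      = -1/2 * (bernoulli (2*l-1) / ((2*l-1).factorial : ℚ)) := by
    rw [Finset.sum_eq_single 0]
    · norm_num
    · intro s hs hne
      have hlt : 1 < 2*s+1 := by omega
      rw [bernoulli_odd ⟨s, by ring⟩ hlt]
      simp
    · intro h0
      exact absurd (Finset.mem_range.mpr hl) h0
  rw [hodd] at h1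
  have hb1 : bernoulli (2*l - 1) = if l = 1 then (-1/2 : ℚ) else 0 :=
    bernoulli_two_mul_sub_one l hl
  have hfactN : (2*l).factorial = (2*l) * (2*l-1).factorial := by
    rw [show 2*l = 2*l-1+1 by omega, Nat.factorial_succ]
    simp
  have hfact : ((2*l).factorial : ℚ) = ((2*l : ℕ) : ℚ) * ((2*l-1).factorial : ℚ) := by
    exact_mod_cast congrArg (Nat.cast : ℕ → ℚ) hfactN
  have hfne : ((2*l-1).factorial : ℚ) ≠ 0 := by exact_mod_cast (2*l-1).factorial_ne_zero
  have h0 : bernoulli (2*0) / (((2*0).factorial : ℕ) : ℚ)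
      * (bernoulli (2*l-2*0) / (((2*l-2*0).factorial : ℕ) : ℚ))
      = bernoulli (2*l) / ((2*l).factorial : ℚ) := by
    norm_num
  rw [h0] at h1
  have key : ∑ s ∈ Finset.Icc 1 l,
      bernoulli (2*s) / (((2*s).factorial : ℕ) : ℚ)
        * (bernoulli (2*l-2*s) / (((2*l-2*s).factorial : ℕ) : ℚ))
      = -((2*l : ℕ) : ℚ) * (bernoulli (2*l) / ((2*l).factorial : ℚ))
        - (1/2) * (bernoulli (2*l-1) / ((2*l-1).factorial : ℚ)) := by
    linarith
  rw [key, hb1]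
  rcases eq_or_ne l 1 with rfl | h
  · norm_num [Nat.factorial]
  · rw [if_neg h, if_neg h, hfact]
    have h2l : ((2*l : ℕ) : ℚ) ≠ 0 := Nat.cast_ne_zero.mpr (by omega)
    field_simp
    ring
end

section
/- In the setting of the deformed derivatives ∂̂^μ on U(g) for the symmetric ordering (ξ the symmetrization map), for all w ≥ 2 and all indices μ, α_1,...,α_w: Σ_{σ ∈ S_w} [...[[∂̂^μ, x̂_{α_{σ(1)}}], x̂_{α_{σ(2)}}],..., x̂_{α_{σ(w)}}](1) = 0, where the iterated commutators are in End(U(g)) (x̂_ν acting by left multiplication) and evaluation is at 1 ∈ U(g). -/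
open scoped BigOperators
open MvPolynomial

section SymVanishAux

open Equiv LinearMap

set_option maxHeartbeats 1000000
set_option linter.unusedSectionVars false

/- ## List helpers -/

private lemma ofFn_take' {γ : Type*} {w : ℕ} (f : Fin w → γ) (m : ℕ) (hm : m ≤ w) :
    (List.ofFn f).take m = List.ofFn (fun i : Fin m => f ⟨i.1, lt_of_lt_of_le i.2 hm⟩) := by
  apply List.ext_getElem
  · simp [hm]
  · intro i h1 h2
    simp [List.getElem_take, List.getElem_ofFn]

private lemma ofFn_drop' {γ : Type*} {w : ℕ} (f : Fin w → γ) (m : ℕ) (hm : m ≤ w) :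
    (List.ofFn f).drop m = List.ofFn (fun j : Fin (w - m) => f ⟨m + j.1, by omega⟩) := by
  apply List.ext_getElem
  · simp
  · intro i h1 h2
    simp [List.getElem_drop, List.getElem_ofFn]

/- ## Block permutations -/

private def blk {w m : ℕ} (hm : m ≤ w) : (Fin m ⊕ Fin (w - m)) ≃ Fin w :=
  finSumFinEquiv.trans (finCongr (by omega))

private lemma blk_inl {w m : ℕ} (hm : m ≤ w) (i : Fin m) :
    blk hm (Sum.inl i) = ⟨i.1, by omega⟩ := by
  simp [blk, finCongr_apply]; rfl

private lemma blk_inr {w m : ℕ} (hm : m ≤ w) (j : Fin (w - m)) :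
    blk hm (Sum.inr j) = ⟨m + j.1, by omega⟩ := by
  simp [blk, finCongr_apply]; rfl

private def pgl {w m : ℕ} (hm : m ≤ w) (g : Perm (Fin m)) : Perm (Fin w) :=
  (blk hm).permCongr (g.sumCongr (Equiv.refl _))

private def pgr {w m : ℕ} (hm : m ≤ w) (g : Perm (Fin (w - m))) : Perm (Fin w) :=
  (blk hm).permCongr ((Equiv.refl _).sumCongr g)

private lemma blk_symm_lt {w m : ℕ} (hm : m ≤ w) (p : Fin w) (hp : p.1 < m) :
    (blk hm).symm p = Sum.inl ⟨p.1, hp⟩ := by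
  rw [Equiv.symm_apply_eq, blk_inl]

private lemma blk_symm_ge {w m : ℕ} (hm : m ≤ w) (p : Fin w) (hp : m ≤ p.1) :
    (blk hm).symm p = Sum.inr ⟨p.1 - m, by omega⟩ := by
  rw [Equiv.symm_apply_eq, blk_inr]; ext; simp; omega

private lemma pgl_lt {w m : ℕ} (hm : m ≤ w) (g : Perm (Fin m)) (p : Fin w) (hp : p.1 < m) :
    pgl hm g p = ⟨(g ⟨p.1, hp⟩).1, by omega⟩ := by
  rw [pgl, Equiv.permCongr_apply, blk_symm_lt hm p hp]; simp [blk_inl]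

private lemma pgl_ge {w m : ℕ} (hm : m ≤ w) (g : Perm (Fin m)) (p : Fin w) (hp : m ≤ p.1) :
    pgl hm g p = p := by
  rw [pgl, Equiv.permCongr_apply, blk_symm_ge hm p hp]; simp [blk_inr]; ext; simp; omega

private lemma pgr_lt {w m : ℕ} (hm : m ≤ w) (g : Perm (Fin (w - m))) (p : Fin w)
    (hp : p.1 < m) : pgr hm g p = p := by
  rw [pgr, Equiv.permCongr_apply, blk_symm_lt hm p hp]; simp [blk_inl]

private lemma pgr_ge {w m : ℕ} (hm : m ≤ w) (g : Perm (Fin (w - m))) (p : Fin w)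
    (hp : m ≤ p.1) : pgr hm g p = ⟨m + (g ⟨p.1 - m, by omega⟩).1, by omega⟩ := by
  rw [pgr, Equiv.permCongr_apply, blk_symm_ge hm p hp]; simp [blk_inr]

/- ## Polynomial helpers -/

private lemma pderiv_prod {R : Type*} [CommRing R] {n : ℕ} {ι : Type*} [DecidableEq ι]
    (s : Finset ι) (v : ι → Fin n) (μ : Fin n) :
    pderiv μ (∏ i ∈ s, X (v i) : MvPolynomial (Fin n) R)
      = ∑ j ∈ s, if v j = μ then ∏ i ∈ s.erase j, X (v i) else 0 := by
  induction s using Finset.induction_on with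
  | empty => simp
  | @insert a s ha ih =>
      rw [Finset.prod_insert ha, pderiv_mul, ih, Finset.sum_insert ha, Finset.erase_insert ha]
      have hX : pderiv μ (X (v a) : MvPolynomial (Fin n) R) = if v a = μ then 1 else 0 := by
        rw [pderiv_X, Pi.single_apply]
      rw [hX]
      congr 1
      · rw [ite_mul, one_mul, zero_mul]
      · rw [Finset.mul_sum]
        refine Finset.sum_congr rfl fun j hj => ?_
        have hja : j ≠ a := fun h => ha (h ▸ hj)
        rw [mul_ite, mul_zero, Finset.erase_insert_of_ne hja.symm,
          Finset.prod_insert (fun h => ha (Finset.mem_of_mem_erase h))]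

private lemma image_succAbove {k : ℕ} (j : Fin (k+1)) :
    Finset.image j.succAbove Finset.univ = Finset.univ.erase j := by
  ext t
  simp only [Finset.mem_image, Finset.mem_erase, Finset.mem_univ, and_true, true_and]
  constructor
  · rintro ⟨i, rfl⟩
    exact j.succAbove_ne i
  · intro ht
    exact Fin.exists_succAbove_eq_iff.mpr ht

private lemma prod_erase_eq {M : Type*} [CommMonoid M] {k : ℕ} (f : Fin (k+1) → M)
    (j : Fin (k+1)) :
    ∏ i ∈ Finset.univ.erase j, f i = ∏ i : Fin k, f (j.succAbove i) := by
  rw [← image_succAbove j, Finset.prod_image (fun a _ b _ h => j.succAbove_right_injective h)]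

private lemma prod_comp_swap_succAbove {M : Type*} [CommMonoid M] {k : ℕ} (f : Fin (k+1) → M)
    (j : Fin (k+1)) :
    ∏ i : Fin k, f (Equiv.swap j (Fin.last k) (j.succAbove i)) = ∏ i : Fin k, f (i.castSucc) := by
  have hinj : Function.Injective (fun i : Fin k => Equiv.swap j (Fin.last k) (j.succAbove i)) :=
    fun a b h => j.succAbove_right_injective ((Equiv.swap j (Fin.last k)).injective h)
  have himg : Finset.image (fun i : Fin k => Equiv.swap j (Fin.last k) (j.succAbove i))
      Finset.univ = Finset.univ.erase (Fin.last k) := by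
    have h0 : (fun i : Fin k => Equiv.swap j (Fin.last k) (j.succAbove i))
        = (Equiv.swap j (Fin.last k)) ∘ j.succAbove := rfl
    rw [h0, ← Finset.image_image, image_succAbove j,
      Finset.image_erase (Equiv.swap j (Fin.last k)).injective, Equiv.swap_apply_left]
    congr 1
    exact Finset.image_univ_equiv (Equiv.swap j (Fin.last k))
  calc ∏ i : Fin k, f (Equiv.swap j (Fin.last k) (j.succAbove i))
      = ∏ t ∈ Finset.univ.erase (Fin.last k), f t := by
        rw [← himg, Finset.prod_image (fun a _ b _ h => hinj h)]
    _ = ∏ i : Fin k, f ((Fin.last k).succAbove i) := prod_erase_eq f (Fin.last k)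
    _ = ∏ i : Fin k, f (i.castSucc) := by
        refine Finset.prod_congr rfl fun i _ => ?_
        rw [Fin.succAbove_last]

/- ## Operator expansion (Lemma 1) -/

section lem1
variable {K : Type*} [Field K] {A : Type*} [Ring A] [Algebra K A]

private def tpr {w : ℕ} (y : Fin w → A) (τ : Perm (Fin w)) (m : ℕ) : A :=
  ((List.ofFn fun i => y (τ i)).take m).prod

private def dpr {w : ℕ} (y : Fin w → A) (τ : Perm (Fin w)) (m : ℕ) : A :=
  ((List.ofFn fun i => y (τ i)).drop m).prod

private def Gop (Aop : Module.End K A) {w : ℕ} (y : Fin w → A) (τ : Perm (Fin w)) (m : ℕ) :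
    Module.End K A :=
  mulLeft K (dpr y τ m) ∘ₗ Aop ∘ₗ mulLeft K (tpr y τ m)

private lemma lem1 : ∀ (w : ℕ) (y : Fin w → A) (Aop : Module.End K A),
    ∑ σ : Perm (Fin w),
      (List.ofFn fun i => y (σ i)).foldl (fun E a => ⁅E, mulLeft K a⁆) Aop
    = ∑ m ∈ Finset.range (w+1),
        ((-1:ℤ)^(w-m) * (w.choose m : ℤ)) • ∑ τ : Perm (Fin w), Gop Aop y τ m := by
  intro w
  induction w with
  | zero =>
      intro y Aop
      simp [Gop, tpr, dpr, List.ofFn_zero]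
  | succ w ih =>
      intro y Aop
      rw [← Equiv.sum_comp (Equiv.Perm.decomposeFin).symm
        (fun σ : Perm (Fin (w+1)) =>
          (List.ofFn fun i => y (σ i)).foldl (fun E a => ⁅E, mulLeft K a⁆) Aop),
        Fintype.sum_prod_type]
      have hlist : ∀ (p : Fin (w+1)) (e : Perm (Fin w)),
          (List.ofFn fun i => y ((Equiv.Perm.decomposeFin.symm (p, e)) i))
            = y p :: List.ofFn (fun i : Fin w => y (Equiv.swap 0 p (e i).succ)) := by
        intro p e
        rw [List.ofFn_succ]
        simp
      calc
        ∑ p : Fin (w+1), ∑ e : Perm (Fin w),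
            (List.ofFn fun i => y ((Equiv.Perm.decomposeFin.symm (p, e)) i)).foldl
              (fun E a => ⁅E, mulLeft K a⁆) Aop
          = ∑ p : Fin (w+1), ∑ m ∈ Finset.range (w+1),
              ((-1:ℤ)^(w-m) * (w.choose m : ℤ)) •
                ∑ τ : Perm (Fin w),
                  Gop ⁅Aop, mulLeft K (y p)⁆ (fun j : Fin w => y (Equiv.swap 0 p j.succ)) τ m := by
            refine Finset.sum_congr rfl fun p _ => ?_
            rw [← ih (fun j : Fin w => y (Equiv.swap 0 p j.succ)) ⁅Aop, mulLeft K (y p)⁆]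
            refine Finset.sum_congr rfl fun e _ => ?_
            rw [hlist p e, List.foldl_cons]
        _ = ∑ p : Fin (w+1), ∑ m ∈ Finset.range (w+1),
              ((-1:ℤ)^(w-m) * (w.choose m : ℤ)) •
                ∑ τ : Perm (Fin w),
                  (Gop Aop y (Equiv.Perm.decomposeFin.symm (p, τ)) (m+1)
                    - Gop Aop y (Equiv.Perm.decomposeFin.symm (p, τ) * finRotate (w+1)) m) := by
            refine Finset.sum_congr rfl fun p _ => ?_
            refine Finset.sum_congr rfl fun m hm => ?_
            rw [Finset.mem_range] at hm
            have hm' : m ≤ w := by omega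
            congr 1
            refine Finset.sum_congr rfl fun τ _ => ?_
            set σ := Equiv.Perm.decomposeFin.symm (p, τ) with hσ
            set lst := List.ofFn (fun i : Fin w => y (Equiv.swap 0 p (τ i).succ)) with hlst
            have hlen : lst.length = w := by simp [hlst]
            have l1 : (List.ofFn fun i => y (σ i)) = y p :: lst := hlist p τ
            have l2 : (List.ofFn fun i => y ((σ * finRotate (w+1)) i)) = lst ++ [y p] := by
              rw [List.ofFn_succ', List.concat_eq_append]
              congr 1
              · rw [hlst]
                congr 1
                funext i
                have h6 : (σ * finRotate (w+1)) i.castSucc = σ i.succ := by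
                  rw [Equiv.Perm.mul_apply, finRotate_succ_apply, Fin.coeSucc_eq_succ]
                rw [h6, hσ, Equiv.Perm.decomposeFin_symm_apply_succ]
              · have h7 : (σ * finRotate (w+1)) (Fin.last w) = σ 0 := by
                  rw [Equiv.Perm.mul_apply, finRotate_succ_apply, Fin.last_add_one]
                rw [h7, hσ, Equiv.Perm.decomposeFin_symm_apply_zero]
            have htp1 : tpr y σ (m+1)
                = y p * tpr (fun j : Fin w => y (Equiv.swap 0 p j.succ)) τ m := by
              rw [tpr, tpr, l1, List.take_succ_cons, List.prod_cons]
            have hdp1 : dpr y σ (m+1)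
                = dpr (fun j : Fin w => y (Equiv.swap 0 p j.succ)) τ m := by
              rw [dpr, dpr, l1, List.drop_succ_cons]
            have htp2 : tpr y (σ * finRotate (w+1)) m
                = tpr (fun j : Fin w => y (Equiv.swap 0 p j.succ)) τ m := by
              rw [tpr, tpr, l2, List.take_append_of_le_length (by omega)]
            have hdp2 : dpr y (σ * finRotate (w+1)) m
                = dpr (fun j : Fin w => y (Equiv.swap 0 p j.succ)) τ m * y p := by
              rw [dpr, dpr, l2, List.drop_append_of_le_length (by omega), List.prod_append,
                List.prod_singleton]
            rw [Gop, Gop, Gop, htp1, hdp1, htp2, hdp2, Ring.lie_def, Module.End.mul_eq_comp, Module.End.mul_eq_comp]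
            ext u
            simp [mul_sub, sub_mul, mul_assoc]
        _ = ∑ m ∈ Finset.range (w+1),
              ((-1:ℤ)^(w-m) * (w.choose m : ℤ)) •
                (∑ σ : Perm (Fin (w+1)), Gop Aop y σ (m+1)
                  - ∑ σ : Perm (Fin (w+1)), Gop Aop y σ m) := by
            rw [Finset.sum_comm]
            refine Finset.sum_congr rfl fun m _ => ?_
            rw [← Finset.smul_sum]
            congr 1
            have h1 : ∑ p : Fin (w+1), ∑ τ : Perm (Fin w),
                Gop Aop y (Equiv.Perm.decomposeFin.symm (p, τ)) (m+1)
                = ∑ σ : Perm (Fin (w+1)), Gop Aop y σ (m+1) := by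
              calc ∑ p : Fin (w+1), ∑ τ : Perm (Fin w),
                    Gop Aop y (Equiv.Perm.decomposeFin.symm (p, τ)) (m+1)
                  = ∑ pe : Fin (w+1) × Perm (Fin w),
                      Gop Aop y (Equiv.Perm.decomposeFin.symm pe) (m+1) :=
                    (Fintype.sum_prod_type fun pe =>
                      Gop Aop y (Equiv.Perm.decomposeFin.symm pe) (m+1)).symm
                _ = _ := Equiv.sum_comp (Equiv.Perm.decomposeFin).symm
                    (fun σ => Gop Aop y σ (m+1))
            have h2 : ∑ p : Fin (w+1), ∑ τ : Perm (Fin w),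
                Gop Aop y (Equiv.Perm.decomposeFin.symm (p, τ) * finRotate (w+1)) m
                = ∑ σ : Perm (Fin (w+1)), Gop Aop y σ m := by
              calc ∑ p : Fin (w+1), ∑ τ : Perm (Fin w),
                    Gop Aop y (Equiv.Perm.decomposeFin.symm (p, τ) * finRotate (w+1)) m
                  = ∑ pe : Fin (w+1) × Perm (Fin w),
                      Gop Aop y (Equiv.Perm.decomposeFin.symm pe * finRotate (w+1)) m :=
                    (Fintype.sum_prod_type fun pe =>
                      Gop Aop y (Equiv.Perm.decomposeFin.symm pe * finRotate (w+1)) m).symm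
                _ = ∑ σ : Perm (Fin (w+1)), Gop Aop y (σ * finRotate (w+1)) m :=
                    Equiv.sum_comp (Equiv.Perm.decomposeFin).symm
                      (fun σ => Gop Aop y (σ * finRotate (w+1)) m)
                _ = _ := Equiv.sum_comp (Equiv.mulRight (finRotate (w+1)))
                      (fun σ => Gop Aop y σ m)
            have expand : ∑ p : Fin (w+1), ∑ τ : Perm (Fin w),
                (Gop Aop y (Equiv.Perm.decomposeFin.symm (p, τ)) (m+1)
                  - Gop Aop y (Equiv.Perm.decomposeFin.symm (p, τ) * finRotate (w+1)) m)
                = (∑ p : Fin (w+1), ∑ τ : Perm (Fin w),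
                    Gop Aop y (Equiv.Perm.decomposeFin.symm (p, τ)) (m+1))
                  - ∑ p : Fin (w+1), ∑ τ : Perm (Fin w),
                      Gop Aop y (Equiv.Perm.decomposeFin.symm (p, τ) * finRotate (w+1)) m := by
              rw [← Finset.sum_sub_distrib]
              exact Finset.sum_congr rfl fun p _ => by rw [← Finset.sum_sub_distrib]
            rw [expand, h1, h2, ← Finset.sum_sub_distrib]
        _ = ∑ m ∈ Finset.range (w+1+1),
              ((-1:ℤ)^(w+1-m) * ((w+1).choose m : ℤ)) • ∑ τ : Perm (Fin (w+1)), Gop Aop y τ m := by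
            set S : ℕ → Module.End K A := fun k => ∑ σ : Perm (Fin (w+1)), Gop Aop y σ k with hS
            have lhs_eq : ∑ m ∈ Finset.range (w+1),
                ((-1:ℤ)^(w-m) * (w.choose m : ℤ)) • (S (m+1) - S m)
                = ∑ m ∈ Finset.range (w+1), ((-1:ℤ)^(w-m) * (w.choose m : ℤ)) • S (m+1)
                  - ∑ m ∈ Finset.range (w+1), ((-1:ℤ)^(w-m) * (w.choose m : ℤ)) • S m := by
              rw [← Finset.sum_sub_distrib]
              refine Finset.sum_congr rfl fun m _ => smul_sub _ _ _
            rw [lhs_eq]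
            rw [Finset.sum_range_succ'
              (fun m => ((-1:ℤ)^(w+1-m) * ((w+1).choose m : ℤ)) • S m) (w+1)]
            have hsplit : ∀ k ∈ Finset.range (w+1),
                ((-1:ℤ)^(w+1-(k+1)) * ((w+1).choose (k+1) : ℤ)) • S (k+1)
                = ((-1:ℤ)^(w-k) * (w.choose k : ℤ)) • S (k+1)
                  + ((-1:ℤ)^(w-k) * (w.choose (k+1) : ℤ)) • S (k+1) := by
              intro k hk
              rw [Finset.mem_range] at hk
              have h1 : w + 1 - (k+1) = w - k := by omega
              rw [h1, ← add_smul]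
              congr 1
              rw [Nat.choose_succ_succ]
              push_cast
              ring
            rw [Finset.sum_congr rfl hsplit, Finset.sum_add_distrib]
            have hterm2 : ∑ k ∈ Finset.range (w+1),
                  ((-1:ℤ)^(w-k) * (w.choose (k+1) : ℤ)) • S (k+1)
                + ((-1:ℤ)^(w+1-0) * ((w+1).choose 0 : ℤ)) • S 0
                = - ∑ m ∈ Finset.range (w+1), ((-1:ℤ)^(w-m) * (w.choose m : ℤ)) • S m := by
              rw [Finset.sum_range_succ
                (fun k => ((-1:ℤ)^(w-k) * (w.choose (k+1) : ℤ)) • S (k+1)) w]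
              rw [Nat.choose_succ_self]
              simp only [Nat.cast_zero, mul_zero, zero_smul, add_zero]
              rw [Finset.sum_range_succ' (fun m => ((-1:ℤ)^(w-m) * (w.choose m : ℤ)) • S m) w]
              rw [neg_add]
              congr 1
              · rw [← Finset.sum_neg_distrib]
                refine Finset.sum_congr rfl fun k hk => ?_
                rw [Finset.mem_range] at hk
                rw [← neg_smul]
                congr 1
                have h2 : (-1:ℤ)^(w-k) = (-1)^(w-(k+1)) * (-1) := by
                  rw [← pow_succ]
                  congr 1
                  omega
                rw [h2]
                ring
              · rw [← neg_smul]
                congr 1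
                have h3 : (-1:ℤ)^(w+1-0) = -(-1)^(w-0) := by
                  have h4 : w + 1 - 0 = (w - 0) + 1 := by omega
                  rw [h4, pow_succ]
                  ring
                rw [h3]
                simp
            rw [add_assoc, hterm2]
            abel

end lem1

/- ## Averaging lemmas -/

section avg
variable {K : Type*} [Field K] [CharZero K] {A : Type*} [Ring A] [Algebra K A]
variable {n : ℕ} {x : Fin n → A} {ξ : MvPolynomial (Fin n) K →ₗ[K] A}

private lemma avg_take {w : ℕ} (m : ℕ) (hm : m ≤ w)
    (hξ : ∀ (k : ℕ) (v : Fin k → Fin n),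
      ξ (∏ i, X (v i)) = ((Nat.factorial k : K)⁻¹) •
        ∑ σ : Perm (Fin k), (List.ofFn fun i => x (v (σ i))).prod)
    (α : Fin w → Fin n) (T : A →ₗ[K] A) (c : Perm (Fin w) → A)
    (hc : ∀ τ g, c (τ * pgl hm g) = c τ) :
    ∑ τ : Perm (Fin w), c τ * T (ξ (∏ i : Fin m, X (α (τ ⟨i.1, lt_of_lt_of_le i.2 hm⟩))))
    = ∑ τ : Perm (Fin w), c τ * T (tpr (fun p => x (α p)) τ m) := by
  have hfac : ((m.factorial : K)) ≠ 0 := Nat.cast_ne_zero.mpr (Nat.factorial_ne_zero m)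
  have key : ∀ g : Perm (Fin m),
      ∑ τ : Perm (Fin w), c τ *
        T ((List.ofFn fun i : Fin m => x (α (τ ⟨(g i).1, lt_of_lt_of_le (g i).2 hm⟩))).prod)
      = ∑ τ : Perm (Fin w), c τ * T (tpr (fun p => x (α p)) τ m) := by
    intro g
    rw [← Equiv.sum_comp (Equiv.mulRight (pgl hm g))
      (fun τ => c τ * T (tpr (fun p => x (α p)) τ m))]
    refine Finset.sum_congr rfl fun τ _ => ?_
    have hmr : (Equiv.mulRight (pgl hm g)) τ = τ * pgl hm g := rfl
    rw [hmr, hc τ g]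
    have hfun : (fun i : Fin m => x (α ((τ * pgl hm g) ⟨i.1, lt_of_lt_of_le i.2 hm⟩)))
        = fun i : Fin m => x (α (τ ⟨(g i).1, lt_of_lt_of_le (g i).2 hm⟩)) := by
      funext i
      have h1 : (τ * pgl hm g) ⟨i.1, lt_of_lt_of_le i.2 hm⟩
          = τ ⟨(g i).1, lt_of_lt_of_le (g i).2 hm⟩ := by
        rw [Equiv.Perm.mul_apply, pgl_lt hm g _ i.2]
      rw [h1]
    have htp : tpr (fun p => x (α p)) (τ * pgl hm g) m
        = (List.ofFn fun i : Fin m =>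
            x (α (τ ⟨(g i).1, lt_of_lt_of_le (g i).2 hm⟩))).prod := by
      simp only [tpr]
      rw [ofFn_take' _ m hm, hfun]
    rw [htp]
  calc
    ∑ τ : Perm (Fin w), c τ * T (ξ (∏ i : Fin m, X (α (τ ⟨i.1, lt_of_lt_of_le i.2 hm⟩))))
      = ∑ τ : Perm (Fin w), (m.factorial : K)⁻¹ •
          ∑ g : Perm (Fin m), c τ *
            T ((List.ofFn fun i : Fin m =>
              x (α (τ ⟨(g i).1, lt_of_lt_of_le (g i).2 hm⟩))).prod) := by
        refine Finset.sum_congr rfl fun τ _ => ?_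
        rw [hξ m (fun i => α (τ ⟨i.1, lt_of_lt_of_le i.2 hm⟩)), map_smul, map_sum,
          mul_smul_comm, Finset.mul_sum]
    _ = (m.factorial : K)⁻¹ • ∑ g : Perm (Fin m), ∑ τ : Perm (Fin w), c τ *
          T ((List.ofFn fun i : Fin m =>
            x (α (τ ⟨(g i).1, lt_of_lt_of_le (g i).2 hm⟩))).prod) := by
        rw [← Finset.smul_sum, Finset.sum_comm]
    _ = (m.factorial : K)⁻¹ • ∑ _g : Perm (Fin m),
          ∑ τ : Perm (Fin w), c τ * T (tpr (fun p => x (α p)) τ m) := by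
        rw [Finset.sum_congr rfl fun g _ => key g]
    _ = ∑ τ : Perm (Fin w), c τ * T (tpr (fun p => x (α p)) τ m) := by
        rw [Finset.sum_const, Finset.card_univ, Fintype.card_perm, Fintype.card_fin,
          ← Nat.cast_smul_eq_nsmul K, smul_smul, inv_mul_cancel₀ hfac, one_smul]

private lemma avg_drop {w : ℕ} (m : ℕ) (hm : m ≤ w)
    (hξ : ∀ (k : ℕ) (v : Fin k → Fin n),
      ξ (∏ i, X (v i)) = ((Nat.factorial k : K)⁻¹) •
        ∑ σ : Perm (Fin k), (List.ofFn fun i => x (v (σ i))).prod)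
    (α : Fin w → Fin n) (c : Perm (Fin w) → A)
    (hc : ∀ τ g, c (τ * pgr hm g) = c τ) :
    ∑ τ : Perm (Fin w), ξ (∏ j : Fin (w - m), X (α (τ ⟨m + j.1, by omega⟩))) * c τ
    = ∑ τ : Perm (Fin w), dpr (fun p => x (α p)) τ m * c τ := by
  have hfac : (((w - m).factorial : K)) ≠ 0 :=
    Nat.cast_ne_zero.mpr (Nat.factorial_ne_zero (w - m))
  have key : ∀ g : Perm (Fin (w - m)),
      ∑ τ : Perm (Fin w),
        ((List.ofFn fun j : Fin (w - m) => x (α (τ ⟨m + (g j).1, by omega⟩))).prod) * c τ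
      = ∑ τ : Perm (Fin w), dpr (fun p => x (α p)) τ m * c τ := by
    intro g
    rw [← Equiv.sum_comp (Equiv.mulRight (pgr hm g))
      (fun τ => dpr (fun p => x (α p)) τ m * c τ)]
    refine Finset.sum_congr rfl fun τ _ => ?_
    have hmr : (Equiv.mulRight (pgr hm g)) τ = τ * pgr hm g := rfl
    rw [hmr, hc τ g]
    have hfun : (fun j : Fin (w - m) => x (α ((τ * pgr hm g) ⟨m + j.1, by omega⟩)))
        = fun j : Fin (w - m) => x (α (τ ⟨m + (g j).1, by omega⟩)) := by
      funext j
      have h1 : (τ * pgr hm g) ⟨m + j.1, by omega⟩ = τ ⟨m + (g j).1, by omega⟩ := by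
        rw [Equiv.Perm.mul_apply, pgr_ge hm g _ (by simp)]
        congr 1
        ext
        simp
      rw [h1]
    have hdp : dpr (fun p => x (α p)) (τ * pgr hm g) m
        = (List.ofFn fun j : Fin (w - m) => x (α (τ ⟨m + (g j).1, by omega⟩))).prod := by
      simp only [dpr]
      rw [ofFn_drop' _ m hm, hfun]
    rw [hdp]
  calc
    ∑ τ : Perm (Fin w), ξ (∏ j : Fin (w - m), X (α (τ ⟨m + j.1, by omega⟩))) * c τ
      = ∑ τ : Perm (Fin w), ((w - m).factorial : K)⁻¹ •
          ∑ g : Perm (Fin (w - m)),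
            ((List.ofFn fun j : Fin (w - m) =>
              x (α (τ ⟨m + (g j).1, by omega⟩))).prod) * c τ := by
        refine Finset.sum_congr rfl fun τ _ => ?_
        rw [hξ (w - m) (fun j => α (τ ⟨m + j.1, by omega⟩)), smul_mul_assoc, Finset.sum_mul]
    _ = ((w - m).factorial : K)⁻¹ • ∑ g : Perm (Fin (w - m)), ∑ τ : Perm (Fin w),
          ((List.ofFn fun j : Fin (w - m) =>
            x (α (τ ⟨m + (g j).1, by omega⟩))).prod) * c τ := by
        rw [← Finset.smul_sum, Finset.sum_comm]
    _ = ((w - m).factorial : K)⁻¹ • ∑ _g : Perm (Fin (w - m)),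
          ∑ τ : Perm (Fin w), dpr (fun p => x (α p)) τ m * c τ := by
        rw [Finset.sum_congr rfl fun g _ => key g]
    _ = ∑ τ : Perm (Fin w), dpr (fun p => x (α p)) τ m * c τ := by
        rw [Finset.sum_const, Finset.card_univ, Fintype.card_perm, Fintype.card_fin,
          ← Nat.cast_smul_eq_nsmul K, smul_smul, inv_mul_cancel₀ hfac, one_smul]

end avg

private lemma swap_emb {w m : ℕ} (hm : m < w) (j : Fin (m+1)) (t : Fin (m+1)) :
    Equiv.swap (⟨j.1, by omega⟩ : Fin w) ⟨m, hm⟩ ⟨t.1, by omega⟩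
      = ⟨((Equiv.swap j (Fin.last m)) t).1, by omega⟩ := by
  rcases eq_or_ne t j with h | htj
  · subst h
    rw [Equiv.swap_apply_left]; simp only [Equiv.swap_apply_left]
    ext
    simp
  · rcases eq_or_ne t (Fin.last m) with h | htl
    · subst h
      have h0 : (⟨(Fin.last m).1, by omega⟩ : Fin w) = ⟨m, hm⟩ := by ext; simp
      rw [h0, Equiv.swap_apply_right]; simp only [Equiv.swap_apply_right]
    · have h1 : (⟨t.1, by omega⟩ : Fin w) ≠ ⟨j.1, by omega⟩ := by
        simp only [ne_eq, Fin.mk.injEq]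
        exact fun h => htj (Fin.ext h)
      have h2 : (⟨t.1, by omega⟩ : Fin w) ≠ ⟨m, hm⟩ := by
        simp only [ne_eq, Fin.mk.injEq]
        intro h
        exact htl (Fin.ext (by simpa using h))
      rw [Equiv.swap_apply_of_ne_of_ne h1 h2]; simp only [Equiv.swap_apply_of_ne_of_ne htj htl]

section mid
variable {K : Type*} [Field K] [CharZero K] {A : Type*} [Ring A] [Algebra K A]
variable {n : ℕ} {x : Fin n → A} {ξ : MvPolynomial (Fin n) K →ₗ[K] A}

private lemma lem3 {w : ℕ} (m : ℕ) (hm : m < w) (α : Fin w → Fin n) (μ : Fin n) :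
    ∑ τ : Perm (Fin w),
      ξ (∏ j : Fin (w - (m+1)), X (α (τ ⟨m + 1 + j.1, by omega⟩)))
        * ξ (pderiv μ (∏ i : Fin (m+1), X (α (τ ⟨i.1, by omega⟩))))
    = (m+1) • ∑ τ : Perm (Fin w),
        (if α (τ ⟨m, hm⟩) = μ then
          ξ (∏ j : Fin (w - (m+1)), X (α (τ ⟨m + 1 + j.1, by omega⟩)))
            * ξ (∏ i : Fin m, X (α (τ ⟨i.1, by omega⟩))) else 0) := by
  have step1 : ∀ τ : Perm (Fin w),
      ξ (∏ j : Fin (w - (m+1)), X (α (τ ⟨m + 1 + j.1, by omega⟩)))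
        * ξ (pderiv μ (∏ i : Fin (m+1), X (α (τ ⟨i.1, by omega⟩))))
      = ∑ j : Fin (m+1),
          (if α (τ ⟨j.1, by omega⟩) = μ then
            ξ (∏ j' : Fin (w - (m+1)), X (α (τ ⟨m + 1 + j'.1, by omega⟩)))
              * ξ (∏ i : Fin m, X (α (τ ⟨(j.succAbove i).1, by omega⟩))) else 0) := by
    intro τ
    rw [pderiv_prod Finset.univ (fun i : Fin (m+1) => α (τ ⟨i.1, by omega⟩)) μ,
      map_sum, Finset.mul_sum]
    refine Finset.sum_congr rfl fun j _ => ?_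
    rw [apply_ite ξ, map_zero, mul_ite, mul_zero]
    congr 2
    rw [prod_erase_eq (fun i : Fin (m+1) => X (α (τ ⟨i.1, by omega⟩))) j]
  rw [Finset.sum_congr rfl fun τ _ => step1 τ, Finset.sum_comm]
  have step2 : ∀ j : Fin (m+1),
      ∑ τ : Perm (Fin w),
        (if α (τ ⟨j.1, by omega⟩) = μ then
          ξ (∏ j' : Fin (w - (m+1)), X (α (τ ⟨m + 1 + j'.1, by omega⟩)))
            * ξ (∏ i : Fin m, X (α (τ ⟨(j.succAbove i).1, by omega⟩))) else 0)
      = ∑ τ : Perm (Fin w),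
          (if α (τ ⟨m, hm⟩) = μ then
            ξ (∏ j' : Fin (w - (m+1)), X (α (τ ⟨m + 1 + j'.1, by omega⟩)))
              * ξ (∏ i : Fin m, X (α (τ ⟨i.1, by omega⟩))) else 0) := by
    intro j
    rw [← Equiv.sum_comp (Equiv.mulRight (Equiv.swap (⟨j.1, by omega⟩ : Fin w) ⟨m, hm⟩))
      (fun τ => if α (τ ⟨m, hm⟩) = μ then
            ξ (∏ j' : Fin (w - (m+1)), X (α (τ ⟨m + 1 + j'.1, by omega⟩)))
              * ξ (∏ i : Fin m, X (α (τ ⟨i.1, by omega⟩))) else 0)]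
    refine Finset.sum_congr rfl fun τ _ => ?_
    have hmr : (Equiv.mulRight (Equiv.swap (⟨j.1, by omega⟩ : Fin w) ⟨m, hm⟩)) τ
        = τ * Equiv.swap (⟨j.1, by omega⟩ : Fin w) ⟨m, hm⟩ := rfl
    rw [hmr]
    have hcond : (τ * Equiv.swap (⟨j.1, by omega⟩ : Fin w) ⟨m, hm⟩) ⟨m, hm⟩
        = τ ⟨j.1, by omega⟩ := by
      rw [Equiv.Perm.mul_apply, Equiv.swap_apply_right]
    have hpd : (∏ j' : Fin (w - (m+1)),
          X (α ((τ * Equiv.swap (⟨j.1, by omega⟩ : Fin w) ⟨m, hm⟩) ⟨m + 1 + j'.1, by omega⟩)) :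
        MvPolynomial (Fin n) K)
        = ∏ j' : Fin (w - (m+1)), X (α (τ ⟨m + 1 + j'.1, by omega⟩)) := by
      refine Finset.prod_congr rfl fun j' _ => ?_
      have h3 : (τ * Equiv.swap (⟨j.1, by omega⟩ : Fin w) ⟨m, hm⟩) ⟨m + 1 + j'.1, by omega⟩
          = τ ⟨m + 1 + j'.1, by omega⟩ := by
        rw [Equiv.Perm.mul_apply, Equiv.swap_apply_of_ne_of_ne]
        · simp only [ne_eq, Fin.mk.injEq]
          have := j.2
          omega
        · simp only [ne_eq, Fin.mk.injEq]
          omega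
      rw [h3]
    have hpt : (∏ i : Fin m,
          X (α ((τ * Equiv.swap (⟨j.1, by omega⟩ : Fin w) ⟨m, hm⟩) ⟨i.1, by omega⟩)) :
        MvPolynomial (Fin n) K)
        = ∏ i : Fin m, X (α (τ ⟨(j.succAbove i).1, by omega⟩)) := by
      have key := prod_comp_swap_succAbove
        (fun t : Fin (m+1) =>
          (X (α (τ ⟨((Equiv.swap j (Fin.last m)) t).1, by omega⟩)) : MvPolynomial (Fin n) K)) j
      simp only [Equiv.swap_apply_self] at key
      refine Eq.trans ?_ (key.symm.trans ?_)
      · refine Finset.prod_congr rfl fun i _ => ?_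
        have h4 : (τ * Equiv.swap (⟨j.1, by omega⟩ : Fin w) ⟨m, hm⟩) ⟨i.1, by omega⟩
            = τ ⟨((Equiv.swap j (Fin.last m)) i.castSucc).1, by omega⟩ := by
          rw [Equiv.Perm.mul_apply]
          congr 1
          have h5 : (⟨i.1, by omega⟩ : Fin w) = ⟨(i.castSucc).1, by omega⟩ := rfl
          rw [h5, swap_emb hm j i.castSucc]
        rw [h4]
      · refine Finset.prod_congr rfl fun i _ => rfl
    rw [hcond, hpd, hpt]
  rw [Finset.sum_congr rfl fun j _ => step2 j, Finset.sum_const, Finset.card_univ,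
    Fintype.card_fin]

private lemma lem5 {w : ℕ} (m : ℕ) (hm : m < w) (α : Fin w → Fin n) (μ : Fin n)
    (x : Fin n → A) :
    ∑ τ : Perm (Fin w),
      (if α (τ ⟨m, hm⟩) = μ then
        dpr (fun p => x (α p)) τ (m+1) * tpr (fun p => x (α p)) τ m else 0)
    = ∑ τ : Perm (Fin w),
        (if α (τ ⟨w - 1, by omega⟩) = μ then tpr (fun p => x (α p)) τ (w - 1) else 0) := by
  haveI : NeZero w := ⟨by omega⟩
  rw [← Equiv.sum_comp
    (Equiv.mulRight ((Equiv.addRight (⟨w - 1 - m, by omega⟩ : Fin w)) : Perm (Fin w)))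
    (fun τ => if α (τ ⟨m, hm⟩) = μ then
        dpr (fun p => x (α p)) τ (m+1) * tpr (fun p => x (α p)) τ m else 0)]
  refine Finset.sum_congr rfl fun τ _ => ?_
  have hmr : (Equiv.mulRight ((Equiv.addRight (⟨w - 1 - m, by omega⟩ : Fin w)) : Perm (Fin w))) τ
      = τ * (Equiv.addRight (⟨w - 1 - m, by omega⟩ : Fin w) : Perm (Fin w)) := rfl
  rw [hmr]
  have happ : ∀ (p : Fin w),
      (τ * (Equiv.addRight (⟨w - 1 - m, by omega⟩ : Fin w) : Perm (Fin w))) p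
        = τ ⟨(p.1 + (w - 1 - m)) % w, Nat.mod_lt _ (by omega)⟩ := by
    intro p
    rfl
  have hcond : (τ * (Equiv.addRight (⟨w - 1 - m, by omega⟩ : Fin w) : Perm (Fin w))) ⟨m, hm⟩
      = τ ⟨w - 1, by omega⟩ := by
    rw [happ]
    congr 1
    ext
    simp only []
    have h1 : m + (w - 1 - m) = w - 1 := by omega
    rw [h1, Nat.mod_eq_of_lt (by omega)]
  have hprod : dpr (fun p => x (α p))
        (τ * (Equiv.addRight (⟨w - 1 - m, by omega⟩ : Fin w) : Perm (Fin w))) (m+1)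
      * tpr (fun p => x (α p))
        (τ * (Equiv.addRight (⟨w - 1 - m, by omega⟩ : Fin w) : Perm (Fin w))) m
      = tpr (fun p => x (α p)) τ (w - 1) := by
    simp only [tpr, dpr]
    rw [ofFn_drop' _ (m+1) (by omega), ofFn_take' _ m (by omega), ofFn_take' _ (w-1) (by omega),
      ← List.prod_append]
    congr 1
    apply List.ext_getElem
    · simp
      omega
    · intro t h1 h2
      by_cases ht : t < w - (m+1)
      · rw [List.getElem_append_left (by simpa using ht)]
        simp only [List.getElem_ofFn]
        congr 2
        rw [happ]
        congr 1
        ext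
        show (m + 1 + t + (w - 1 - m)) % w = t
        have he : m + 1 + t + (w - 1 - m) = w + t := by omega
        rw [he, Nat.add_mod_left, Nat.mod_eq_of_lt (by omega)]
      · rw [List.getElem_append_right (by simpa using ht)]
        simp only [List.getElem_ofFn, List.length_ofFn]
        congr 2
        rw [happ]
        congr 1
        ext
        show (t - (w - (m+1)) + (w - 1 - m)) % w = t
        have hlen : t < w - 1 := by
          have := h2
          simp at this
          omega
        have he : t - (w - (m+1)) + (w - 1 - m) = t := by omega
        rw [he, Nat.mod_eq_of_lt (by omega)]
  rw [hcond, hprod]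

end mid

private lemma scalar_zero (w : ℕ) (hw : 2 ≤ w) :
    ∑ m ∈ Finset.range (w+1), ((-1:ℤ)^(w-m) * (w.choose m : ℤ) * m) = 0 := by
  obtain ⟨W, rfl⟩ : ∃ W, w = W + 2 := ⟨w - 2, by omega⟩
  rw [Finset.sum_range_succ'
    (fun m => ((-1:ℤ)^(W+2-m) * ((W+2).choose m : ℤ) * m)) (W+2)]
  simp only [Nat.cast_zero, mul_zero, add_zero]
  have hterm : ∀ k ∈ Finset.range (W+2),
      ((-1:ℤ)^(W+2-(k+1)) * ((W+2).choose (k+1) : ℤ) * ((k+1 : ℕ) : ℤ))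
        = ((W:ℤ)+2) * ((-1:ℤ)^(W+1-k) * ((W+1).choose k : ℤ)) := by
    intro k hk
    have h1 : W + 2 - (k+1) = W + 1 - k := by omega
    have h2 := congrArg (Nat.cast (R := ℤ)) (Nat.add_one_mul_choose_eq (W+1) k)
    simp only [Nat.succ_eq_add_one, show W + 1 + 1 = W + 2 from rfl] at h2
    push_cast at h2
    rw [h1]
    push_cast
    linear_combination (-(-1:ℤ)^(W+1-k)) * h2
  rw [Finset.sum_congr rfl hterm, ← Finset.mul_sum]
  have halt : ∑ k ∈ Finset.range (W+2), ((-1:ℤ)^(W+1-k) * ((W+1).choose k : ℤ)) = 0 := by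
    rw [← Finset.sum_range_reflect]
    have hrefl : ∀ j ∈ Finset.range (W+2),
        ((-1:ℤ)^(W+1-(W+2-1-j)) * ((W+1).choose (W+2-1-j) : ℤ))
          = (-1:ℤ)^j * ((W+1).choose j : ℤ) := by
      intro j hj
      rw [Finset.mem_range] at hj
      have h1 : W + 1 - (W + 2 - 1 - j) = j := by omega
      have h2 : W + 2 - 1 - j = W + 1 - j := by omega
      rw [h1, h2, Nat.choose_symm (by omega)]
    rw [Finset.sum_congr rfl hrefl]
    have halt2 := Int.alternating_sum_range_choose (n := W+1)
    rw [if_neg (by omega)] at halt2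
    exact halt2
  rw [halt, mul_zero]

section mid2
variable {K : Type*} [Field K] [CharZero K] {A : Type*} [Ring A] [Algebra K A]
variable {n : ℕ} {x : Fin n → A} {ξ : MvPolynomial (Fin n) K →ₗ[K] A}

private lemma lem2 {w : ℕ} (m : ℕ) (hm : m ≤ w)
    (hξ : ∀ (k : ℕ) (v : Fin k → Fin n),
      ξ (∏ i, X (v i)) = ((Nat.factorial k : K)⁻¹) •
        ∑ σ : Perm (Fin k), (List.ofFn fun i => x (v (σ i))).prod)
    (α : Fin w → Fin n) (μ : Fin n) (Dop : A →ₗ[K] A)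
    (hD : ∀ f : MvPolynomial (Fin n) K, Dop (ξ f) = ξ (pderiv μ f)) :
    ∑ τ : Perm (Fin w), dpr (fun p => x (α p)) τ m * Dop (tpr (fun p => x (α p)) τ m)
    = ∑ τ : Perm (Fin w),
        ξ (∏ j : Fin (w - m), X (α (τ ⟨m + j.1, by omega⟩)))
          * ξ (pderiv μ (∏ i : Fin m, X (α (τ ⟨i.1, lt_of_lt_of_le i.2 hm⟩)))) := by
  have hc1 : ∀ (τ : Perm (Fin w)) (g : Perm (Fin m)),
      ξ (∏ j : Fin (w - m), X (α ((τ * pgl hm g) ⟨m + j.1, by omega⟩)))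
        = ξ (∏ j : Fin (w - m), X (α (τ ⟨m + j.1, by omega⟩))) := by
    intro τ g
    congr 1
    refine Finset.prod_congr rfl fun j _ => ?_
    rw [Equiv.Perm.mul_apply, pgl_ge hm g _ (Nat.le_add_right m j.1)]
  have hc2 : ∀ (τ : Perm (Fin w)) (g : Perm (Fin (w - m))),
      Dop (tpr (fun p => x (α p)) (τ * pgr hm g) m)
        = Dop (tpr (fun p => x (α p)) τ m) := by
    intro τ g
    congr 1
    simp only [tpr]
    rw [ofFn_take' _ m hm, ofFn_take' _ m hm]
    have hfun : (fun i : Fin m => x (α ((τ * pgr hm g) ⟨i.1, lt_of_lt_of_le i.2 hm⟩)))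
        = fun i : Fin m => x (α (τ ⟨i.1, lt_of_lt_of_le i.2 hm⟩)) := by
      funext i
      rw [Equiv.Perm.mul_apply, pgr_lt hm g _ i.2]
    rw [hfun]
  symm
  calc
    ∑ τ : Perm (Fin w),
        ξ (∏ j : Fin (w - m), X (α (τ ⟨m + j.1, by omega⟩)))
          * ξ (pderiv μ (∏ i : Fin m, X (α (τ ⟨i.1, lt_of_lt_of_le i.2 hm⟩))))
      = ∑ τ : Perm (Fin w),
          ξ (∏ j : Fin (w - m), X (α (τ ⟨m + j.1, by omega⟩)))
            * Dop (ξ (∏ i : Fin m, X (α (τ ⟨i.1, lt_of_lt_of_le i.2 hm⟩)))) := by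
        refine Finset.sum_congr rfl fun τ _ => ?_
        rw [hD]
    _ = ∑ τ : Perm (Fin w),
          ξ (∏ j : Fin (w - m), X (α (τ ⟨m + j.1, by omega⟩)))
            * Dop (tpr (fun p => x (α p)) τ m) :=
        avg_take m hm hξ α Dop
          (fun τ => ξ (∏ j : Fin (w - m), X (α (τ ⟨m + j.1, by omega⟩))))
          (fun τ g => hc1 τ g)
    _ = ∑ τ : Perm (Fin w),
          dpr (fun p => x (α p)) τ m * Dop (tpr (fun p => x (α p)) τ m) :=
        avg_drop m hm hξ α (fun τ => Dop (tpr (fun p => x (α p)) τ m))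
          (fun τ g => hc2 τ g)

private lemma lem4 {w : ℕ} (m : ℕ) (hm : m < w)
    (hξ : ∀ (k : ℕ) (v : Fin k → Fin n),
      ξ (∏ i, X (v i)) = ((Nat.factorial k : K)⁻¹) •
        ∑ σ : Perm (Fin k), (List.ofFn fun i => x (v (σ i))).prod)
    (α : Fin w → Fin n) (μ : Fin n) :
    ∑ τ : Perm (Fin w),
      (if α (τ ⟨m, hm⟩) = μ then
        ξ (∏ j : Fin (w - (m+1)), X (α (τ ⟨m + 1 + j.1, by omega⟩)))
          * ξ (∏ i : Fin m, X (α (τ ⟨i.1, by omega⟩))) else 0)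
    = ∑ τ : Perm (Fin w),
        (if α (τ ⟨m, hm⟩) = μ then
          dpr (fun p => x (α p)) τ (m+1) * tpr (fun p => x (α p)) τ m else 0) := by
  have hmw : m ≤ w := le_of_lt hm
  have hc1 : ∀ (τ : Perm (Fin w)) (g : Perm (Fin m)),
      (if α ((τ * pgl hmw g) ⟨m, hm⟩) = μ then
          ξ (∏ j : Fin (w - (m+1)), X (α ((τ * pgl hmw g) ⟨m + 1 + j.1, by omega⟩))) else 0)
        = (if α (τ ⟨m, hm⟩) = μ then
            ξ (∏ j : Fin (w - (m+1)), X (α (τ ⟨m + 1 + j.1, by omega⟩))) else 0) := by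
    intro τ g
    have hcnd : (τ * pgl hmw g) ⟨m, hm⟩ = τ ⟨m, hm⟩ := by
      rw [Equiv.Perm.mul_apply, pgl_ge hmw g _ (le_refl m)]
    have hpd : (∏ j : Fin (w - (m+1)),
          X (α ((τ * pgl hmw g) ⟨m + 1 + j.1, by omega⟩)) : MvPolynomial (Fin n) K)
        = ∏ j : Fin (w - (m+1)), X (α (τ ⟨m + 1 + j.1, by omega⟩)) := by
      refine Finset.prod_congr rfl fun j _ => ?_
      rw [Equiv.Perm.mul_apply, pgl_ge hmw g _ (by show m ≤ m+1+j.1; omega)]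
    rw [hcnd, hpd]
  have hc2 : ∀ (τ : Perm (Fin w)) (g : Perm (Fin (w - (m+1)))),
      (if α ((τ * pgr (show m+1 ≤ w by omega) g) ⟨m, hm⟩) = μ then
          tpr (fun p => x (α p)) (τ * pgr (show m+1 ≤ w by omega) g) m else 0)
        = (if α (τ ⟨m, hm⟩) = μ then tpr (fun p => x (α p)) τ m else 0) := by
    intro τ g
    have hcnd : (τ * pgr (show m+1 ≤ w by omega) g) ⟨m, hm⟩ = τ ⟨m, hm⟩ := by
      rw [Equiv.Perm.mul_apply, pgr_lt (show m+1 ≤ w by omega) g _ (by show m < m+1; omega)]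
    have htpr : tpr (fun p => x (α p)) (τ * pgr (show m+1 ≤ w by omega) g) m
        = tpr (fun p => x (α p)) τ m := by
      simp only [tpr]
      rw [ofFn_take' _ m hmw, ofFn_take' _ m hmw]
      have hfun : (fun i : Fin m =>
            x (α ((τ * pgr (show m+1 ≤ w by omega) g) ⟨i.1, lt_of_lt_of_le i.2 hmw⟩)))
          = fun i : Fin m => x (α (τ ⟨i.1, lt_of_lt_of_le i.2 hmw⟩)) := by
        funext i
        rw [Equiv.Perm.mul_apply, pgr_lt (show m+1 ≤ w by omega) g _
          (by have h9 := i.2; show i.1 < m+1; omega)]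
      rw [hfun]
    rw [hcnd, htpr]
  calc
    ∑ τ : Perm (Fin w),
        (if α (τ ⟨m, hm⟩) = μ then
          ξ (∏ j : Fin (w - (m+1)), X (α (τ ⟨m + 1 + j.1, by omega⟩)))
            * ξ (∏ i : Fin m, X (α (τ ⟨i.1, by omega⟩))) else 0)
      = ∑ τ : Perm (Fin w),
          (if α (τ ⟨m, hm⟩) = μ then
            ξ (∏ j : Fin (w - (m+1)), X (α (τ ⟨m + 1 + j.1, by omega⟩))) else 0)
          * (LinearMap.id : A →ₗ[K] A)
              (ξ (∏ i : Fin m, X (α (τ ⟨i.1, lt_of_lt_of_le i.2 hmw⟩)))) := by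
        refine Finset.sum_congr rfl fun τ _ => ?_
        split_ifs <;> simp
    _ = ∑ τ : Perm (Fin w),
          (if α (τ ⟨m, hm⟩) = μ then
            ξ (∏ j : Fin (w - (m+1)), X (α (τ ⟨m + 1 + j.1, by omega⟩))) else 0)
          * (LinearMap.id : A →ₗ[K] A) (tpr (fun p => x (α p)) τ m) :=
        avg_take m hmw hξ α LinearMap.id
          (fun τ => if α (τ ⟨m, hm⟩) = μ then
            ξ (∏ j : Fin (w - (m+1)), X (α (τ ⟨m + 1 + j.1, by omega⟩))) else 0)
          (fun τ g => hc1 τ g)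
    _ = ∑ τ : Perm (Fin w),
          ξ (∏ j : Fin (w - (m+1)), X (α (τ ⟨m + 1 + j.1, by omega⟩)))
            * (if α (τ ⟨m, hm⟩) = μ then tpr (fun p => x (α p)) τ m else 0) := by
        refine Finset.sum_congr rfl fun τ _ => ?_
        split_ifs <;> simp
    _ = ∑ τ : Perm (Fin w),
          dpr (fun p => x (α p)) τ (m+1)
            * (if α (τ ⟨m, hm⟩) = μ then tpr (fun p => x (α p)) τ m else 0) :=
        avg_drop (m+1) (by omega) hξ α
          (fun τ => if α (τ ⟨m, hm⟩) = μ then tpr (fun p => x (α p)) τ m else 0)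
          (fun τ g => hc2 τ g)
    _ = ∑ τ : Perm (Fin w),
          (if α (τ ⟨m, hm⟩) = μ then
            dpr (fun p => x (α p)) τ (m+1) * tpr (fun p => x (α p)) τ m else 0) := by
        refine Finset.sum_congr rfl fun τ _ => ?_
        split_ifs <;> simp

end mid2

end SymVanishAux

set_option maxHeartbeats 2000000 in
/-- For the deformed derivatives `∂̂^μ = D μ` on `U(g)` in symmetric
ordering (`D μ ∘ ξ = ξ ∘ ∂^μ` with `ξ` the symmetrization map), for all `w ≥ 2`:
`Σ_{σ ∈ S_w} […[[∂̂^μ, x̂_{α_{σ(1)}}], x̂_{α_{σ(2)}}],…, x̂_{α_{σ(w)}}](1) = 0`,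
iterated commutators taken in `End(U(g))` with `x̂_ν` acting by left multiplication. -/
theorem symmetrized_iterated_commutators_vanish_on_vacuum
    (K : Type*) [Field K] [CharZero K]
    (L : Type*) [LieRing L] [LieAlgebra K L]
    (n : ℕ) (b : Module.Basis (Fin n) K L)
    (ξ : MvPolynomial (Fin n) K →ₗ[K] UniversalEnvelopingAlgebra K L)
    (hbij : Function.Bijective ξ)
    (hξ : ∀ (m : ℕ) (v : Fin m → Fin n),
      ξ (∏ i, X (v i))
        = ((Nat.factorial m : K)⁻¹) •
            ∑ σ : Equiv.Perm (Fin m),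
              (List.ofFn fun i => UniversalEnvelopingAlgebra.ι K (b (v (σ i)))).prod)
    (D : Fin n → Module.End K (UniversalEnvelopingAlgebra K L))
    (hD : ∀ (μ : Fin n) (f : MvPolynomial (Fin n) K),
      D μ (ξ f) = ξ (MvPolynomial.pderiv μ f)) :
    ∀ w : ℕ, 2 ≤ w → ∀ (μ : Fin n) (α : Fin w → Fin n),
      ∑ σ : Equiv.Perm (Fin w),
        ((List.ofFn fun i => α (σ i)).foldl
            (fun (E : Module.End K (UniversalEnvelopingAlgebra K L)) ν =>
              ⁅E, LinearMap.mulLeft K (UniversalEnvelopingAlgebra.ι K (b ν))⁆)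
            (D μ)) (1 : UniversalEnvelopingAlgebra K L) = 0 := by
  intro w hw μ α
  set x : Fin n → UniversalEnvelopingAlgebra K L :=
    fun ν => UniversalEnvelopingAlgebra.ι K (b ν) with hxdef
  have hξ1 : ξ (1 : MvPolynomial (Fin n) K) = 1 := by
    simpa using hξ 0 (fun i => i.elim0)
  have hD1 : D μ (1 : UniversalEnvelopingAlgebra K L) = 0 := by
    have h := hD μ 1
    rw [hξ1] at h
    rw [h, (pderiv μ).map_one_eq_zero, map_zero]
  calc
    ∑ σ : Equiv.Perm (Fin w),
        ((List.ofFn fun i => α (σ i)).foldl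
            (fun (E : Module.End K (UniversalEnvelopingAlgebra K L)) ν =>
              ⁅E, LinearMap.mulLeft K (x ν)⁆)
            (D μ)) (1 : UniversalEnvelopingAlgebra K L)
      = ∑ σ : Equiv.Perm (Fin w),
          ((List.ofFn fun i => x (α (σ i))).foldl
            (fun (E : Module.End K (UniversalEnvelopingAlgebra K L)) a =>
              ⁅E, LinearMap.mulLeft K a⁆)
            (D μ)) (1 : UniversalEnvelopingAlgebra K L) := by
        refine Finset.sum_congr rfl fun σ _ => ?_
        congr 1
        rw [show (List.ofFn fun i => x (α (σ i))) = (List.ofFn fun i => α (σ i)).map x from by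
          rw [List.map_ofFn]; rfl, List.foldl_map]
    _ = (∑ σ : Equiv.Perm (Fin w),
          (List.ofFn fun i => x (α (σ i))).foldl
            (fun (E : Module.End K (UniversalEnvelopingAlgebra K L)) a =>
              ⁅E, LinearMap.mulLeft K a⁆)
            (D μ)) (1 : UniversalEnvelopingAlgebra K L) :=
        (LinearMap.sum_apply _ _ _).symm
    _ = (∑ m ∈ Finset.range (w+1),
          ((-1:ℤ)^(w-m) * (w.choose m : ℤ)) •
            ∑ τ : Equiv.Perm (Fin w), Gop (D μ) (fun p => x (α p)) τ m)
          (1 : UniversalEnvelopingAlgebra K L) := by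
        exact congrArg (fun F : Module.End K (UniversalEnvelopingAlgebra K L) =>
          F (1 : UniversalEnvelopingAlgebra K L)) (lem1 w (fun p => x (α p)) (D μ))
    _ = ∑ m ∈ Finset.range (w+1),
          ((-1:ℤ)^(w-m) * (w.choose m : ℤ)) •
            ∑ τ : Equiv.Perm (Fin w),
              dpr (fun p => x (α p)) τ m * (D μ) (tpr (fun p => x (α p)) τ m) := by
        rw [LinearMap.sum_apply]
        refine Finset.sum_congr rfl fun m _ => ?_
        rw [LinearMap.smul_apply, LinearMap.sum_apply]
        congr 1
        refine Finset.sum_congr rfl fun τ _ => ?_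
        simp only [Gop, LinearMap.comp_apply, LinearMap.mulLeft_apply, mul_one]
    _ = ∑ m ∈ Finset.range (w+1),
          ((-1:ℤ)^(w-m) * (w.choose m : ℤ) * (m:ℤ)) •
            ∑ τ : Equiv.Perm (Fin w),
              (if α (τ ⟨w - 1, by omega⟩) = μ then
                tpr (fun p => x (α p)) τ (w - 1) else 0) := by
        refine Finset.sum_congr rfl fun m hm => ?_
        rw [Finset.mem_range] at hm
        cases m with
        | zero =>
            have hz : ∀ τ : Equiv.Perm (Fin w),
                dpr (fun p => x (α p)) τ 0 * (D μ) (tpr (fun p => x (α p)) τ 0) = 0 := by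
              intro τ
              have ht : tpr (fun p => x (α p)) τ 0 = 1 := rfl
              rw [ht, hD1, mul_zero]
            rw [Finset.sum_congr rfl fun τ _ => hz τ, Finset.sum_const_zero, smul_zero]
            simp
        | succ m' =>
            have hm' : m' < w := by omega
            have e2 := lem2 (x := x) (ξ := ξ) (m'+1) (show m'+1 ≤ w by omega) hξ α μ (D μ) (hD μ)
            rw [e2]
            rw [lem3 (ξ := ξ) m' hm' α μ]
            rw [lem4 (x := x) (ξ := ξ) m' hm' hξ α μ]
            rw [lem5 (A := UniversalEnvelopingAlgebra K L) m' hm' α μ x]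
            rw [← Nat.cast_smul_eq_nsmul ℤ (m'+1), smul_smul]
    _ = (∑ m ∈ Finset.range (w+1),
          ((-1:ℤ)^(w-m) * (w.choose m : ℤ) * (m:ℤ))) •
            ∑ τ : Equiv.Perm (Fin w),
              (if α (τ ⟨w - 1, by omega⟩) = μ then
                tpr (fun p => x (α p)) τ (w - 1) else 0) :=
        (Finset.sum_smul).symm
    _ = 0 := by
        rw [scalar_zero w hw, zero_smul]
end

section
/- In symmetric ordering (ξ the symmetrization map from S(g) to U(g)), the deformed derivatives act on powers of a single linear element in the classical (undeformed) way: for â = a^β x̂_β ∈ g ⊂ U(g) and p ≥ s ≥ 0, (1/s!) ∂̂^{α_1} ∂̂^{α_2} ··· ∂̂^{α_s}(â^p) = binom(p, s) · a^{α_1} a^{α_2} ··· a^{α_s} · â^{p-s}. -/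
open scoped BigOperators
open MvPolynomial

private lemma foldl_smul_end {K M : Type*} [Semiring K] [AddCommMonoid M] [Module K M]
    (l : List (Module.End K M)) (c : K) (x : M) :
    l.foldl (fun u E => E u) (c • x) = c • l.foldl (fun u E => E u) x := by
  induction l generalizing x with
  | nil => rfl
  | cons E t ih => simp only [List.foldl_cons, map_smul, ih]

private lemma pow_sum_smul_expand {K A : Type*} [CommSemiring K] [Semiring A] [Algebra K A]
    {n : ℕ} (a : Fin n → K) (c : Fin n → A) :
    ∀ p : ℕ, (∑ β, a β • c β) ^ p
      = ∑ v : Fin p → Fin n, (∏ i, a (v i)) • (List.ofFn fun i => c (v i)).prod := by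
  intro p
  induction p with
  | zero => simp
  | succ p ih =>
    have key := Fintype.sum_equiv (Fin.consEquiv (fun _ : Fin (p+1) => Fin n))
      (fun x : Fin n × (Fin p → Fin n) =>
        (a x.1 * ∏ i, a (x.2 i)) • (c x.1 * (List.ofFn fun i => c (x.2 i)).prod))
      (fun v : Fin (p+1) → Fin n => (∏ i, a (v i)) • (List.ofFn fun i => c (v i)).prod)
      (by
        intro x
        simp [Fin.consEquiv, Fin.prod_univ_succ, List.ofFn_succ])
    rw [pow_succ', ih, Finset.mul_sum, ← key, Fintype.sum_prod_type]
    simp_rw [Finset.sum_mul, smul_mul_assoc, mul_smul_comm, smul_smul]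
    exact Finset.sum_comm

/-- In symmetric ordering (`D μ ∘ ξ = ξ ∘ ∂^μ` with `ξ` the symmetrization
map `S(g) → U(g)`), the deformed derivatives act classically on powers of a single linear
element `â = aᵝ x̂_β`: for `p ≥ s ≥ 0`,
`(1/s!) ∂̂^{α₁} ⋯ ∂̂^{α_s}(â^p) = binom(p,s) · a^{α₁}⋯a^{α_s} · â^{p-s}`. -/
theorem deformed_derivatives_classical_on_powers
    (K : Type*) [Field K] [CharZero K]
    (L : Type*) [LieRing L] [LieAlgebra K L]
    (n : ℕ) (b : Module.Basis (Fin n) K L)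
    (ξ : MvPolynomial (Fin n) K →ₗ[K] UniversalEnvelopingAlgebra K L)
    (hbij : Function.Bijective ξ)
    (hξ : ∀ (m : ℕ) (v : Fin m → Fin n),
      ξ (∏ i, X (v i))
        = ((Nat.factorial m : K)⁻¹) •
            ∑ σ : Equiv.Perm (Fin m),
              (List.ofFn fun i => UniversalEnvelopingAlgebra.ι K (b (v (σ i)))).prod)
    (D : Fin n → Module.End K (UniversalEnvelopingAlgebra K L))
    (hD : ∀ (μ : Fin n) (f : MvPolynomial (Fin n) K),
      D μ (ξ f) = ξ (MvPolynomial.pderiv μ f))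
    (a : Fin n → K) :
    ∀ (p s : ℕ), s ≤ p → ∀ α : Fin s → Fin n,
      ((Nat.factorial s : K)⁻¹) •
          ((List.ofFn fun i => D (α i)).foldl (fun u E => E u)
            ((∑ β, a β • UniversalEnvelopingAlgebra.ι K (b β)) ^ p))
        = (p.choose s : K) • (∏ i, a (α i)) •
            (∑ β, a β • UniversalEnvelopingAlgebra.ι K (b β)) ^ (p - s) := by
  set u : UniversalEnvelopingAlgebra K L := ∑ β, a β • UniversalEnvelopingAlgebra.ι K (b β)
    with hu
  set g : MvPolynomial (Fin n) K := ∑ β, a β • X β with hg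
  -- ξ sends powers of g to powers of u
  have hA : ∀ q : ℕ, ξ (g ^ q) = u ^ q := by
    intro q
    rw [hg, pow_sum_smul_expand, map_sum]
    have h1 : ∀ v : Fin q → Fin n,
        ξ ((∏ i, a (v i)) • (List.ofFn fun i => (X (v i) : MvPolynomial (Fin n) K)).prod)
          = (∏ i, a (v i)) • ((Nat.factorial q : K)⁻¹ •
              ∑ σ : Equiv.Perm (Fin q),
                (List.ofFn fun i => UniversalEnvelopingAlgebra.ι K (b (v (σ i)))).prod) := by
      intro v
      rw [map_smul, List.prod_ofFn, hξ]
    have h3 : ∀ σ : Equiv.Perm (Fin q),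
        (∑ v : Fin q → Fin n, (∏ i, a (v i)) •
            (List.ofFn fun i => UniversalEnvelopingAlgebra.ι K (b (v (σ i)))).prod)
        = ∑ w : Fin q → Fin n, (∏ i, a (w i)) •
            (List.ofFn fun i => UniversalEnvelopingAlgebra.ι K (b (w i))).prod := by
      intro σ
      apply Fintype.sum_equiv (Equiv.arrowCongr σ.symm (Equiv.refl (Fin n)))
      intro v
      have hp : (∏ i, a (v i)) = ∏ i, a (v (σ i)) := (Equiv.prod_comp σ fun i => a (v i)).symm
      rw [hp]
      simp [Equiv.arrowCongr, Function.comp]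
    simp_rw [h1]
    have swap : (∑ v : Fin q → Fin n, (∏ i, a (v i)) • ((Nat.factorial q : K)⁻¹ •
              ∑ σ : Equiv.Perm (Fin q),
                (List.ofFn fun i => UniversalEnvelopingAlgebra.ι K (b (v (σ i)))).prod))
        = (Nat.factorial q : K)⁻¹ • ∑ σ : Equiv.Perm (Fin q), ∑ v : Fin q → Fin n,
            (∏ i, a (v i)) •
              (List.ofFn fun i => UniversalEnvelopingAlgebra.ι K (b (v (σ i)))).prod := by
      have step : ∀ v : Fin q → Fin n,
          (∏ i, a (v i)) • ((Nat.factorial q : K)⁻¹ •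
              ∑ σ : Equiv.Perm (Fin q),
                (List.ofFn fun i => UniversalEnvelopingAlgebra.ι K (b (v (σ i)))).prod)
            = ∑ σ : Equiv.Perm (Fin q), (Nat.factorial q : K)⁻¹ • ((∏ i, a (v i)) •
                (List.ofFn fun i => UniversalEnvelopingAlgebra.ι K (b (v (σ i)))).prod) := by
        intro v
        rw [smul_comm, Finset.smul_sum, Finset.smul_sum]
      simp_rw [step]
      rw [Finset.sum_comm, Finset.smul_sum]
      exact Finset.sum_congr rfl fun σ _ => Finset.smul_sum.symm
    rw [swap]
    simp_rw [h3]
    rw [Finset.sum_const, Finset.card_univ, Fintype.card_perm, Fintype.card_fin,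
      ← Nat.cast_smul_eq_nsmul K, smul_smul,
      inv_mul_cancel₀ (by exact_mod_cast Nat.factorial_ne_zero q), one_smul]
    rw [hu, pow_sum_smul_expand]
  -- action of D on powers of u
  have hDu : ∀ (μ : Fin n) (q : ℕ), D μ (u ^ (q + 1)) = ((q + 1 : K) * a μ) • u ^ q := by
    intro μ q
    rw [← hA (q + 1), hD, ← hA q, ← map_smul]
    congr 1
    have hgd : (pderiv μ) g = C (a μ) := by
      rw [hg, map_sum]
      classical
      simp [Pi.single_apply, Finset.sum_ite_eq', MvPolynomial.C_eq_smul_one]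
    rw [Derivation.leibniz_pow, hgd, Nat.add_sub_cancel]
    rw [smul_eq_mul, mul_comm, ← MvPolynomial.smul_eq_C_mul, ← Nat.cast_smul_eq_nsmul K,
      smul_smul]
    push_cast
    ring_nf
  -- key computation with descending factorials
  have key : ∀ (s p : ℕ), s ≤ p → ∀ α : Fin s → Fin n,
      (List.ofFn fun i => D (α i)).foldl (fun u E => E u) (u ^ p)
        = (p.descFactorial s : K) • (∏ i, a (α i)) • u ^ (p - s) := by
    intro s
    induction s with
    | zero => intro p _ α; simp
    | succ s ih =>
      intro p hsp α
      cases p with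
      | zero => omega
      | succ q =>
        rw [List.ofFn_succ, List.foldl_cons]
        show (List.ofFn fun i => D (α i.succ)).foldl (fun u E => E u) (D (α 0) (u ^ (q+1))) = _
        rw [hDu (α 0) q, foldl_smul_end, ih q (by omega) (fun i => α i.succ),
          Nat.succ_descFactorial_succ, Fin.prod_univ_succ, Nat.succ_sub_succ]
        rw [smul_smul, smul_smul, smul_smul]
        congr 1
        push_cast
        ring
  intro p s hsp α
  rw [key s p hsp α, Nat.descFactorial_eq_factorial_mul_choose, smul_smul, smul_smul, smul_smul]
  congr 1
  have h0 : (s.factorial : K) ≠ 0 := by exact_mod_cast Nat.factorial_ne_zero s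
  push_cast
  field_simp
  try ring
end
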